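/- Let K be a differential field of characteristic 0 and let H = A B^{-1} with A, B ∈ K[∂], B ≠ 0, be a fraction of scalar differential operators. Then the following are equivalent: (i) the order of B is minimal among all right fractional decompositions of H; (ii) A and B have no non-invertible common right divisor in K[∂]; (iii) A and B have no common non-zero kernel element in the linear closure of K. -/

import Mathlib

/-! Right division with remainder makes `K[∂]` right Euclidean, so `A` and `B` have a right gcd
`G = U A + V B`. If `G` is a unit, every other representation `C D⁻¹` of `A B⁻¹` has `D = B Q`,
whence `ord B ≤ ord D`, and every common solution satisfies `x = U (A x) + V (B x) = 0`.
Conversely, a non-invertible common right divisor `D` either lowers the order of the denominator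
or, having positive order, has a non-zero solution in the differential field of rational
functions in `X₀, X₁, …` where `Xᵢ` plays the `i`-th derivative of the solution; that solution is
then common to `A` and `B`. -/

/-- The ring of differential operators K[∂] over a differential field (K, d),
characterized abstractly. -/
structure DiffOpRing (K : Type) [Field K] (d : K → K) (R : Type) [Ring R] where
  ι : K →+* R
  dop : R
  comm : ∀ a : K, dop * ι a = ι a * dop + ι (d a)
  repr : ∀ r : R, ∃! c : ℕ →₀ K, r = c.sum fun i a => ι a * dop ^ i

/-- The coefficients of a differential operator. -/
noncomputable def DiffOpRing.coeff {K : Type} [Field K] {d : K → K} {R : Type} [Ring R]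
    (S : DiffOpRing K d R) (r : R) : ℕ →₀ K := (S.repr r).choose

/-- The order of a differential operator. -/
noncomputable def DiffOpRing.ord {K : Type} [Field K] {d : K → K} {R : Type} [Ring R]
    (S : DiffOpRing K d R) (r : R) : ℕ := (S.coeff r).support.sup id

namespace DualNumber

open TrivSqZeroExt

variable {A B : Type*} [CommRing A] [CommRing B]

def ringHomOfDeriv (f : A →+* B) (D : A → B) (hadd : ∀ a b, D (a + b) = D a + D b)
    (hmul : ∀ a b, D (a * b) = f a * D b + D a * f b) : A →+* DualNumber B where
  toFun a := inl (f a) + inr (D a)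
  map_one' := by
    have h := hmul 1 1
    simp only [mul_one, map_one, one_mul, left_eq_add] at h
    ext <;> simp [h]
  map_mul' a b := by ext <;> simp [hmul]
  map_zero' := by
    have h := hadd 0 0
    simp only [add_zero, left_eq_add] at h
    ext <;> simp [h]
  map_add' a b := by ext <;> simp [hadd]

@[simp]
lemma fst_ringHomOfDeriv (f : A →+* B) (D : A → B) (hadd) (hmul) (a : A) :
    (ringHomOfDeriv f D hadd hmul a).fst = f a := by simp [ringHomOfDeriv]

@[simp]
lemma snd_ringHomOfDeriv (f : A →+* B) (D : A → B) (hadd) (hmul) (a : A) :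
    (ringHomOfDeriv f D hadd hmul a).snd = D a := by simp [ringHomOfDeriv]

end DualNumber

section ExtendDerivation

open TrivSqZeroExt DualNumber MvPolynomial

/- A derivation is the second component of a ring hom into dual numbers, and ring homs extend to
localizations as soon as they send the inverted elements to units. -/
theorem IsLocalization.exists_extend_deriv {P L : Type*} [CommRing P] [CommRing L] [Algebra P L]
    (M : Submonoid P) [IsLocalization M L] (D : P → L) (hadd : ∀ a b, D (a + b) = D a + D b)
    (hmul : ∀ a b, D (a * b) = algebraMap P L a * D b + D a * algebraMap P L b) :
    ∃ dL : L → L, (∀ x y, dL (x + y) = dL x + dL y) ∧ (∀ x y, dL (x * y) = x * dL y + dL x * y) ∧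
      ∀ p, dL (algebraMap P L p) = D p := by
  set Φ₀ := ringHomOfDeriv (algebraMap P L) D hadd hmul
  have hunit : ∀ y : M, IsUnit (Φ₀ y) := fun y => by
    rw [isUnit_iff_isUnit_fst, fst_ringHomOfDeriv]
    exact IsLocalization.map_units L y
  set Φ : L →+* DualNumber L := IsLocalization.lift hunit
  have hfst : ∀ x, (Φ x).fst = x := by
    have : (fstHom ℤ L L).toRingHom.comp Φ = RingHom.id L :=
      IsLocalization.ringHom_ext M (RingHom.ext fun p => by simp [Φ, Φ₀, IsLocalization.lift_eq])
    exact RingHom.congr_fun this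
  refine ⟨fun x => (Φ x).snd, fun x y => by simp, fun x y => ?_, fun p => ?_⟩
  · simp only [map_mul, DualNumber.snd_mul, hfst]
  · simp [Φ, Φ₀, IsLocalization.lift_eq]

theorem MvPolynomial.exists_deriv {K σ L : Type*} [CommRing K] [CommRing L]
    (ψ : MvPolynomial σ K →+* L) (dK : K → L) (hadd : ∀ a b, dK (a + b) = dK a + dK b)
    (hmul : ∀ a b, dK (a * b) = ψ (C a) * dK b + dK a * ψ (C b)) (w : σ → L) :
    ∃ D : MvPolynomial σ K → L, (∀ p q, D (p + q) = D p + D q) ∧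
      (∀ p q, D (p * q) = ψ p * D q + D p * ψ q) ∧ (∀ a, D (C a) = dK a) ∧ ∀ i, D (X i) = w i := by
  set Φ := eval₂Hom (ringHomOfDeriv (ψ.comp C) dK hadd hmul) fun i => inl (ψ (X i)) + inr (w i)
  have hfst : ∀ p, (Φ p).fst = ψ p := RingHom.congr_fun
    (show (fstHom ℤ L L).toRingHom.comp Φ = ψ from ringHom_ext (by simp [Φ]) (by simp [Φ]))
  refine ⟨fun p => (Φ p).snd, fun p q => by simp, fun p q => ?_, fun a => by simp [Φ],
    fun i => by simp [Φ]⟩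
  simp only [map_mul, DualNumber.snd_mul, hfst]

end ExtendDerivation

def IsRightCoprime {R : Type*} [Ring R] (A B : R) : Prop :=
  ∀ A₁ B₁ D : R, A = A₁ * D → B = B₁ * D → IsUnit D

namespace DiffOpRing

variable {K : Type} [Field K] {d : K → K} {R : Type} [Ring R] (S : DiffOpRing K d R)

noncomputable def ofCoeff : (ℕ →₀ K) →+ R :=
  Finsupp.liftAddHom fun i => (AddMonoidHom.mulRight (S.dop ^ i)).comp S.ι.toAddMonoidHom

lemma ofCoeff_apply (c : ℕ →₀ K) : S.ofCoeff c = c.sum fun i a => S.ι a * S.dop ^ i := rfl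

lemma ofCoeff_single (i : ℕ) (a : K) : S.ofCoeff (Finsupp.single i a) = S.ι a * S.dop ^ i :=
  Finsupp.liftAddHom_apply_single _ _ _

lemma ofCoeff_coeff (r : R) : S.ofCoeff (S.coeff r) = r := (S.repr r).choose_spec.1.symm

lemma coeff_ofCoeff (c : ℕ →₀ K) : S.coeff (S.ofCoeff c) = c :=
  ((S.repr _).choose_spec.2 c rfl).symm

noncomputable def coeffEquiv : R ≃+ (ℕ →₀ K) :=
  (AddEquiv.mk' ⟨S.ofCoeff, S.coeff, S.coeff_ofCoeff, S.ofCoeff_coeff⟩ (map_add S.ofCoeff)).symm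

@[simp]
lemma coeffEquiv_apply (r : R) : S.coeffEquiv r = S.coeff r := rfl

@[simp]
lemma coeff_zero : S.coeff (0 : R) = 0 := map_zero S.coeffEquiv

@[simp]
lemma coeff_add (r s : R) : S.coeff (r + s) = S.coeff r + S.coeff s := map_add S.coeffEquiv r s

@[simp]
lemma coeff_sub (r s : R) : S.coeff (r - s) = S.coeff r - S.coeff s := map_sub S.coeffEquiv r s

lemma coeff_eq_zero_iff {r : R} : S.coeff r = 0 ↔ r = 0 := S.coeffEquiv.map_eq_zero_iff

lemma coeff_monomial (i : ℕ) (a : K) : S.coeff (S.ι a * S.dop ^ i) = Finsupp.single i a := by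
  rw [← S.ofCoeff_single, coeff_ofCoeff]

lemma coeff_one : S.coeff (1 : R) = Finsupp.single 0 1 := by
  rw [← S.coeff_monomial, map_one, one_mul, pow_zero]

lemma coeff_ι_mul (a : K) (r : R) : S.coeff (S.ι a * r) = a • S.coeff r := by
  conv_lhs => rw [← S.ofCoeff_coeff r]
  induction S.coeff r using Finsupp.induction_linear with
  | zero => simp
  | add f g hf hg => rw [map_add, mul_add, coeff_add, hf, hg, smul_add]
  | single i b => rw [ofCoeff_single, ← mul_assoc, ← map_mul, coeff_monomial,
      Finsupp.smul_single, smul_eq_mul]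

lemma nontrivial (S : DiffOpRing K d R) : Nontrivial R := by
  by_contra h
  rw [not_nontrivial_iff_subsingleton] at h
  have := S.coeff_ofCoeff (Finsupp.single 0 1)
  rw [Subsingleton.elim (S.ofCoeff _) 0, coeff_zero] at this
  exact one_ne_zero (Finsupp.single_eq_zero.1 this.symm)

lemma ι_injective : Function.Injective S.ι :=
  have := S.nontrivial
  S.ι.injective

lemma ι_d_eq_commutator (a : K) : S.ι (d a) = S.dop * S.ι a - S.ι a * S.dop := by
  rw [S.comm]; abel

lemma d_add (S : DiffOpRing K d R) (a b : K) : d (a + b) = d a + d b :=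
  S.ι_injective (by simp only [ι_d_eq_commutator, map_add]; noncomm_ring)

lemma d_mul (S : DiffOpRing K d R) (a b : K) : d (a * b) = a * d b + d a * b :=
  S.ι_injective (by simp only [ι_d_eq_commutator, map_add, map_mul]; noncomm_ring)

lemma d_zero (S : DiffOpRing K d R) : d 0 = 0 := S.ι_injective (by simp [ι_d_eq_commutator])

lemma coeff_dop_mul (r : R) :
    S.coeff (S.dop * r) = (S.coeff r).mapDomain (· + 1) + (S.coeff r).mapRange d S.d_zero := by
  conv_lhs => rw [← S.ofCoeff_coeff r]
  induction S.coeff r using Finsupp.induction_linear with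
  | zero => simp
  | add f g hf hg =>
    rw [map_add, mul_add, coeff_add, hf, hg, Finsupp.mapDomain_add,
      Finsupp.mapRange_add S.d_add]
    abel
  | single i a =>
    rw [ofCoeff_single, ← mul_assoc, S.comm, add_mul, mul_assoc, ← pow_succ', coeff_add,
      coeff_monomial, coeff_monomial, Finsupp.mapDomain_single, Finsupp.mapRange_single]

lemma coeff_dop_mul_succ (r : R) (k : ℕ) :
    S.coeff (S.dop * r) (k + 1) = S.coeff r k + d (S.coeff r (k + 1)) := by
  rw [coeff_dop_mul, Finsupp.add_apply, Finsupp.mapDomain_apply (add_left_injective 1),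
    Finsupp.mapRange_apply]

lemma ord_le_iff {r : R} {n : ℕ} : S.ord r ≤ n ↔ ∀ i, n < i → S.coeff r i = 0 := by
  simp only [ord, Finset.sup_le_iff, Finsupp.mem_support_iff, id]
  exact forall_congr' fun i => by rw [← not_lt, not_imp_not]

lemma coeff_eq_zero_of_ord_lt {r : R} {i : ℕ} (h : S.ord r < i) : S.coeff r i = 0 :=
  S.ord_le_iff.1 le_rfl i h

lemma le_ord_of_coeff_ne_zero {r : R} {i : ℕ} (h : S.coeff r i ≠ 0) : i ≤ S.ord r :=
  Finset.le_sup (f := id) (Finsupp.mem_support_iff.2 h)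

lemma coeff_ord_ne_zero {r : R} (hr : r ≠ 0) : S.coeff r (S.ord r) ≠ 0 := by
  obtain ⟨i, hi, hsup⟩ := Finset.exists_mem_eq_sup _
    (Finsupp.support_nonempty_iff.2 (S.coeff_eq_zero_iff.not.2 hr)) id
  rw [ord, hsup]
  exact Finsupp.mem_support_iff.1 hi

lemma ord_dop_pow_mul_le_and_coeff {s : R} {n : ℕ} (hs : S.ord s ≤ n) (i : ℕ) :
    S.ord (S.dop ^ i * s) ≤ i + n ∧ S.coeff (S.dop ^ i * s) (i + n) = S.coeff s n := by
  induction i generalizing s n with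
  | zero => simpa using hs
  | succ i ih =>
    have hs' : S.ord (S.dop * s) ≤ n + 1 := S.ord_le_iff.2 fun k hk => by
      obtain ⟨k, rfl⟩ := Nat.exists_eq_add_one_of_ne_zero (by omega : k ≠ 0)
      rw [coeff_dop_mul_succ, S.ord_le_iff.1 hs k (by omega),
        S.ord_le_iff.1 hs (k + 1) (by omega), S.d_zero, add_zero]
    rw [pow_succ, mul_assoc, show i + 1 + n = i + (n + 1) by omega]
    refine ⟨(ih hs').1, ?_⟩
    rw [(ih hs').2, coeff_dop_mul_succ, S.coeff_eq_zero_of_ord_lt (i := n + 1) (by omega), S.d_zero,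
      add_zero]

lemma coeff_mul_apply (r s : R) (k : ℕ) :
    S.coeff (r * s) k = (S.coeff r).sum fun i a => a * S.coeff (S.dop ^ i * s) k := by
  conv_lhs => rw [← S.ofCoeff_coeff r, ofCoeff_apply, Finsupp.sum_mul]
  rw [← coeffEquiv_apply, map_finsuppSum, Finsupp.sum_apply]
  simp only [coeffEquiv_apply, mul_assoc, coeff_ι_mul, Finsupp.smul_apply, smul_eq_mul]

lemma ord_mul_le_and_coeff {r s : R} {m n : ℕ} (hr : S.ord r ≤ m) (hs : S.ord s ≤ n) :
    S.ord (r * s) ≤ m + n ∧ S.coeff (r * s) (m + n) = S.coeff r m * S.coeff s n := by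
  have hsupp : ∀ i ∈ (S.coeff r).support, i ≤ m := fun i hi =>
    (S.le_ord_of_coeff_ne_zero (Finsupp.mem_support_iff.1 hi)).trans hr
  have hvanish : ∀ i k, i + n < k → S.coeff (S.dop ^ i * s) k = 0 := fun i k hk =>
    S.coeff_eq_zero_of_ord_lt ((S.ord_dop_pow_mul_le_and_coeff hs i).1.trans_lt hk)
  constructor
  · refine S.ord_le_iff.2 fun k hk => ?_
    rw [coeff_mul_apply]
    refine Finset.sum_eq_zero fun i hi => ?_
    dsimp only
    rw [hvanish i k (by have := hsupp i hi; omega), mul_zero]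
  · rw [coeff_mul_apply, Finsupp.sum, Finset.sum_eq_single m,
      (S.ord_dop_pow_mul_le_and_coeff hs m).2]
    · intro i hi hne
      rw [hvanish i _ (by have := hsupp i hi; omega), mul_zero]
    · intro hm
      rw [Finsupp.notMem_support_iff.1 hm, zero_mul]

lemma coeff_mul_ord_add_ord_ne_zero {r s : R} (hr : r ≠ 0) (hs : s ≠ 0) :
    S.coeff (r * s) (S.ord r + S.ord s) ≠ 0 := by
  rw [(S.ord_mul_le_and_coeff le_rfl le_rfl).2]
  exact mul_ne_zero (S.coeff_ord_ne_zero hr) (S.coeff_ord_ne_zero hs)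

lemma isDomain (S : DiffOpRing K d R) : IsDomain R :=
  haveI := S.nontrivial
  haveI : NoZeroDivisors R := ⟨fun {r s} h => by
    by_contra! hrs
    exact S.coeff_mul_ord_add_ord_ne_zero hrs.1 hrs.2 (by rw [h, coeff_zero]; rfl)⟩
  NoZeroDivisors.to_isDomain R

lemma ord_mul {r s : R} (hr : r ≠ 0) (hs : s ≠ 0) : S.ord (r * s) = S.ord r + S.ord s :=
  le_antisymm (S.ord_mul_le_and_coeff le_rfl le_rfl).1
    (S.le_ord_of_coeff_ne_zero (S.coeff_mul_ord_add_ord_ne_zero hr hs))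

lemma isUnit_of_ord_eq_zero {r : R} (hr : r ≠ 0) (h : S.ord r = 0) : IsUnit r := by
  have hcoeff : S.coeff r = Finsupp.single 0 (S.coeff r 0) := by
    ext i
    rcases Nat.eq_zero_or_pos i with rfl | hi
    · simp
    · rw [S.coeff_eq_zero_of_ord_lt (h ▸ hi), Finsupp.single_eq_of_ne hi.ne']
  have hr' : r = S.ι (S.coeff r 0) := by
    conv_lhs => rw [← S.ofCoeff_coeff r, hcoeff, ofCoeff_single, pow_zero, mul_one]
  rw [hr']
  exact (isUnit_iff_ne_zero.2 (h ▸ S.coeff_ord_ne_zero hr)).map S.ι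

lemma sub_eq_zero_or_ord_sub_lt {r s : R} {n : ℕ} (hr : S.ord r ≤ n) (hs : S.ord s ≤ n)
    (h : S.coeff r n = S.coeff s n) : r - s = 0 ∨ S.ord (r - s) < n := by
  refine or_iff_not_imp_left.2 fun hrs => lt_of_le_of_ne ?_ fun hn => ?_
  · refine S.ord_le_iff.2 fun i hi => ?_
    rw [coeff_sub, Finsupp.sub_apply, S.ord_le_iff.1 hr i hi, S.ord_le_iff.1 hs i hi, sub_zero]
  · apply S.coeff_ord_ne_zero hrs
    rw [hn, coeff_sub, Finsupp.sub_apply, h, sub_self]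

lemma exists_ord_sub_mul_lt {A B : R} (hB : B ≠ 0) (h : S.ord B ≤ S.ord A) :
    ∃ q, A - q * B = 0 ∨ S.ord (A - q * B) < S.ord A := by
  set q := S.ι (S.coeff A (S.ord A) * (S.coeff B (S.ord B))⁻¹) * S.dop ^ (S.ord A - S.ord B)
  have hq : S.ord q ≤ S.ord A - S.ord B := S.ord_le_iff.2 fun i hi => by
    rw [coeff_monomial, Finsupp.single_eq_of_ne hi.ne']
  obtain ⟨hqB, hlead⟩ := S.ord_mul_le_and_coeff hq le_rfl
  rw [Nat.sub_add_cancel h] at hqB hlead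
  refine ⟨q, S.sub_eq_zero_or_ord_sub_lt le_rfl hqB ?_⟩
  rw [hlead, coeff_monomial, Finsupp.single_eq_same,
    inv_mul_cancel_right₀ (S.coeff_ord_ne_zero hB)]

lemma exists_eq_mul_add {B : R} (hB : B ≠ 0) (A : R) :
    ∃ Q r, A = Q * B + r ∧ (r = 0 ∨ S.ord r < S.ord B) := by
  induction hn : S.ord A using Nat.strong_induction_on generalizing A with
  | _ n ih =>
  by_cases hsmall : A = 0 ∨ S.ord A < S.ord B
  · exact ⟨0, A, by rw [zero_mul, zero_add], hsmall⟩
  rw [not_or, not_lt] at hsmall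
  obtain ⟨q, hq | hq⟩ := S.exists_ord_sub_mul_lt hB hsmall.2
  · exact ⟨q, 0, by rw [add_zero, ← sub_eq_zero, hq], Or.inl rfl⟩
  · obtain ⟨Q, r, hQ, hr⟩ := ih _ (hn ▸ hq) (A - q * B) rfl
    exact ⟨q + Q, r, by rw [add_mul, add_assoc, ← hQ, add_sub_cancel], hr⟩

lemma exists_bezout (S : DiffOpRing K d R) (A B : R) :
    ∃ G U V A₁ B₁ : R, G = U * A + V * B ∧ A = A₁ * G ∧ B = B₁ * G := by
  induction hn : S.ord B using Nat.strong_induction_on generalizing A B with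
  | _ n ih =>
  by_cases hB : B = 0
  · exact ⟨A, 1, 0, 1, 0, by rw [one_mul, zero_mul, add_zero], (one_mul A).symm,
      by rw [hB, zero_mul]⟩
  obtain ⟨Q, r, hA, hr | hr⟩ := S.exists_eq_mul_add hB A
  · exact ⟨B, 0, 1, Q, 1, by rw [zero_mul, one_mul, zero_add], by rw [hA, hr, add_zero],
      (one_mul B).symm⟩
  · obtain ⟨G, U, V, B₁, r₁, hG, hB₁, hr₁⟩ := ih _ (hn ▸ hr) B r rfl
    refine ⟨G, V, U - V * Q, Q * B₁ + r₁, B₁, ?_, ?_, hB₁⟩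
    · rw [hG, hA]; noncomm_ring
    · rw [hA, add_mul, mul_assoc, ← hB₁, ← hr₁]

lemma exists_mul_add_mul_eq_one_of_isRightCoprime (S : DiffOpRing K d R) {A B : R}
    (h : IsRightCoprime A B) : ∃ U V : R, U * A + V * B = 1 := by
  obtain ⟨G, U, V, A₁, B₁, hG, hA, hB⟩ := S.exists_bezout A B
  obtain ⟨u, rfl⟩ := h A₁ B₁ G hA hB
  exact ⟨↑u⁻¹ * U, ↑u⁻¹ * V, by rw [mul_assoc, mul_assoc, ← mul_add, ← hG, Units.inv_mul]⟩

/-- The order of `B` is minimal among the denominators `D` of `C D⁻¹ = A B⁻¹`, the equality of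
fractions being witnessed by a common multiple `A E = C F`, `B E = D F` with `E, F ≠ 0`. -/
def HasMinimalDenominator (A B : R) : Prop :=
  ∀ C D : R, D ≠ 0 → (∃ E F : R, E ≠ 0 ∧ F ≠ 0 ∧ A * E = C * F ∧ B * E = D * F) →
    S.ord B ≤ S.ord D

theorem hasMinimalDenominator_iff_isRightCoprime {A B : R} (hB : B ≠ 0) :
    S.HasMinimalDenominator A B ↔ IsRightCoprime A B := by
  have := S.isDomain
  constructor
  · intro hmin A₁ B₁ D hA hBD
    have hD : D ≠ 0 := by rintro rfl; exact hB (by rw [hBD, mul_zero])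
    have hB₁ : B₁ ≠ 0 := by rintro rfl; exact hB (by rw [hBD, zero_mul])
    have hle := hmin A₁ B₁ hB₁ ⟨1, D, one_ne_zero, hD, by rw [mul_one, hA], by rw [mul_one, hBD]⟩
    rw [hBD, S.ord_mul hB₁ hD] at hle
    exact S.isUnit_of_ord_eq_zero hD (by omega)
  · rintro hcop C D - ⟨E, F, hE, hF, hAE, hBE⟩
    obtain ⟨U, V, hUV⟩ := S.exists_mul_add_mul_eq_one_of_isRightCoprime hcop
    have hEQ : E = (U * C + V * D) * F := by
      rw [← one_mul E, ← hUV, add_mul, add_mul, mul_assoc, mul_assoc, hAE, hBE]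
      noncomm_ring
    have hQ : U * C + V * D ≠ 0 := by rintro h; rw [h, zero_mul] at hEQ; exact hE hEQ
    have hDBQ : D = B * (U * C + V * D) :=
      mul_right_cancel₀ hF (by rw [← hBE, mul_assoc, ← hEQ])
    rw [hDBQ, S.ord_mul hB hQ]
    omega

section Action

variable {L : Type*} [Ring L] (ιL : K →+* L) (dL : L → L)

noncomputable def eval (r : R) (x : L) : L := (S.coeff r).sum fun i a => ιL a * dL^[i] x

noncomputable def evalAddHom (x : L) : R →+ L where
  toFun r := S.eval ιL dL r x
  map_zero' := by rw [eval, coeff_zero, Finsupp.sum_zero_index]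
  map_add' r s := by
    simp only [eval, coeff_add]
    exact Finsupp.sum_add_index' (fun _ => by simp) fun _ _ _ => by rw [map_add, add_mul]

lemma eval_add (r s : R) (x : L) :
    S.eval ιL dL (r + s) x = S.eval ιL dL r x + S.eval ιL dL s x :=
  map_add (S.evalAddHom ιL dL x) r s

lemma eval_zero_left (x : L) : S.eval ιL dL 0 x = 0 := map_zero (S.evalAddHom ιL dL x)

lemma eval_one (x : L) : S.eval ιL dL 1 x = x := by
  simp [eval, coeff_one]

lemma eval_monomial (a : K) (i : ℕ) (x : L) :
    S.eval ιL dL (S.ι a * S.dop ^ i) x = ιL a * dL^[i] x := by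
  rw [eval, coeff_monomial, Finsupp.sum_single_index (by rw [map_zero, zero_mul])]

lemma eval_ι_mul (a : K) (r : R) (x : L) :
    S.eval ιL dL (S.ι a * r) x = ιL a * S.eval ιL dL r x := by
  rw [eval, eval, coeff_ι_mul, Finsupp.sum_smul_index (fun _ => by rw [map_zero, zero_mul]),
    Finsupp.mul_sum]
  simp only [map_mul, mul_assoc]

lemma eval_eq_sum_range (r : R) (x : L) :
    S.eval ιL dL r x = ∑ i ∈ Finset.range (S.ord r + 1), ιL (S.coeff r i) * dL^[i] x :=
  Finsupp.sum_of_support_subset _ (fun i hi => Finset.mem_range_succ_iff.2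
    (S.le_ord_of_coeff_ne_zero (Finsupp.mem_support_iff.1 hi))) _
    fun _ _ => by rw [map_zero, zero_mul]

variable {ιL dL}

lemma eval_zero_right (hadd : ∀ a b, dL (a + b) = dL a + dL b) (r : R) :
    S.eval ιL dL r 0 = 0 := by
  have hdL : dL 0 = 0 := by simpa using hadd 0 0
  simp [eval, Function.iterate_fixed hdL]

lemma eval_dop_mul (hadd : ∀ a b, dL (a + b) = dL a + dL b)
    (hmul : ∀ a b, dL (a * b) = a * dL b + dL a * b) (hext : ∀ a, dL (ιL a) = ιL (d a))
    (r : R) (x : L) : S.eval ιL dL (S.dop * r) x = dL (S.eval ιL dL r x) := by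
  rw [← S.ofCoeff_coeff r]
  induction S.coeff r using Finsupp.induction_linear with
  | zero =>
    rw [map_zero, mul_zero, eval_zero_left, eq_comm]
    simpa using hadd 0 0
  | add f g hf hg => rw [map_add, mul_add, eval_add, eval_add, hf, hg, hadd]
  | single i a =>
    rw [ofCoeff_single, ← mul_assoc, S.comm, add_mul, mul_assoc, ← pow_succ', eval_add,
      eval_monomial, eval_monomial, eval_monomial, hmul, hext, Function.iterate_succ_apply',
      add_comm]

lemma eval_dop_pow_mul (hadd : ∀ a b, dL (a + b) = dL a + dL b)
    (hmul : ∀ a b, dL (a * b) = a * dL b + dL a * b) (hext : ∀ a, dL (ιL a) = ιL (d a))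
    (i : ℕ) (r : R) (x : L) : S.eval ιL dL (S.dop ^ i * r) x = dL^[i] (S.eval ιL dL r x) := by
  induction i with
  | zero => rw [pow_zero, one_mul, Function.iterate_zero_apply]
  | succ i ih =>
    rw [pow_succ', mul_assoc, S.eval_dop_mul hadd hmul hext, ih, Function.iterate_succ_apply']

lemma eval_mul (hadd : ∀ a b, dL (a + b) = dL a + dL b)
    (hmul : ∀ a b, dL (a * b) = a * dL b + dL a * b) (hext : ∀ a, dL (ιL a) = ιL (d a))
    (r s : R) (x : L) : S.eval ιL dL (r * s) x = S.eval ιL dL r (S.eval ιL dL s x) := by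
  rw [← S.ofCoeff_coeff r]
  induction S.coeff r using Finsupp.induction_linear with
  | zero => rw [map_zero, zero_mul, eval_zero_left, eval_zero_left]
  | add f g hf hg => rw [map_add, add_mul, eval_add, eval_add, hf, hg]
  | single i a =>
    rw [ofCoeff_single, mul_assoc, eval_ι_mul, eval_monomial, S.eval_dop_pow_mul hadd hmul hext]

end Action

def HasNoCommonSolution (A B : R) : Prop :=
  ∀ (L : Type) (_ : Field L) (ι : K →+* L) (dL : L → L),
    (∀ a b : L, dL (a + b) = dL a + dL b) → (∀ a b : L, dL (a * b) = a * dL b + dL a * b) →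
    (∀ x : K, dL (ι x) = ι (d x)) → ∀ x : L, S.eval ι dL A x = 0 → S.eval ι dL B x = 0 → x = 0

lemma eq_zero_of_isRightCoprime {L : Type*} [Ring L] {ιL : K →+* L} {dL : L → L}
    (hadd : ∀ a b, dL (a + b) = dL a + dL b) (hmul : ∀ a b, dL (a * b) = a * dL b + dL a * b)
    (hext : ∀ a, dL (ιL a) = ιL (d a)) {A B : R} (h : IsRightCoprime A B) {x : L}
    (hA : S.eval ιL dL A x = 0) (hB : S.eval ιL dL B x = 0) : x = 0 := by
  obtain ⟨U, V, hUV⟩ := S.exists_mul_add_mul_eq_one_of_isRightCoprime h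
  rw [← S.eval_one ιL dL x, ← hUV, eval_add, S.eval_mul hadd hmul hext,
    S.eval_mul hadd hmul hext, hA, hB, S.eval_zero_right hadd, S.eval_zero_right hadd, add_zero]

open MvPolynomial in
theorem exists_ne_zero_eval_eq_zero {D : R} (hD : 0 < S.ord D) :
    ∃ (L : Type) (_ : Field L) (ιL : K →+* L) (dL : L → L),
      (∀ a b, dL (a + b) = dL a + dL b) ∧ (∀ a b, dL (a * b) = a * dL b + dL a * b) ∧
      (∀ a, dL (ιL a) = ιL (d a)) ∧ ∃ x ≠ 0, S.eval ιL dL D x = 0 := by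
  set n := S.ord D
  set c := S.coeff D
  let ψ := algebraMap (MvPolynomial ℕ K) (FractionRing (MvPolynomial ℕ K))
  let top : MvPolynomial ℕ K := -∑ l ∈ Finset.range n, C (c l / c n) * X l
  obtain ⟨D₀, hD₀add, hD₀mul, hD₀C, hD₀X⟩ := MvPolynomial.exists_deriv ψ (fun a => ψ (C (d a)))
    (fun a b => by rw [S.d_add, map_add, map_add])
    (fun a b => by rw [S.d_mul, map_add, map_add, map_mul, map_mul, map_mul, map_mul])
    (fun i => ψ (if i + 1 = n then top else X (i + 1)))
  obtain ⟨dL, hadd, hmul, hdL⟩ :=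
    IsLocalization.exists_extend_deriv (nonZeroDivisors _) D₀ hD₀add hD₀mul
  have hiter : ∀ i < n, dL^[i] (ψ (X 0)) = ψ (X i) := by
    intro i hi
    induction i with
    | zero => rfl
    | succ i ih => rw [Function.iterate_succ_apply', ih (by omega), hdL, hD₀X, if_neg (by omega)]
  have htop : dL^[n] (ψ (X 0)) = ψ top := by
    obtain ⟨m, hm⟩ := Nat.exists_eq_add_one_of_ne_zero hD.ne'
    rw [hm, Function.iterate_succ_apply', hiter m (by omega), hdL, hD₀X, if_pos hm.symm]
  have hrel : ∑ i ∈ Finset.range n, C (c i) * X i + C (c n) * top = 0 := by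
    have hcn : c n ≠ 0 := S.coeff_ord_ne_zero (by rintro rfl; simp [n, ord] at hD)
    simp only [top, mul_neg, Finset.mul_sum, ← mul_assoc, ← C_mul, mul_div_cancel₀ _ hcn,
      add_neg_cancel]
  refine ⟨_, inferInstance, ψ.comp C, dL, hadd, hmul, fun a => (hdL (C a)).trans (hD₀C a),
    ψ (X 0), (map_ne_zero_iff ψ (IsFractionRing.injective _ _)).2 (X_ne_zero 0), ?_⟩
  rw [eval_eq_sum_range, Finset.sum_range_succ, htop,
    Finset.sum_congr rfl fun i hi => by rw [hiter i (Finset.mem_range.1 hi)]]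
  have hrel' := congrArg ψ hrel
  simp only [map_add, map_sum, map_mul, map_zero] at hrel'
  exact hrel'

theorem isRightCoprime_iff_hasNoCommonSolution (A B : R) :
    IsRightCoprime A B ↔ S.HasNoCommonSolution A B := by
  refine ⟨fun h L _ ιL dL hadd hmul hext x hA hB =>
    S.eq_zero_of_isRightCoprime hadd hmul hext h hA hB, fun h A₁ B₁ D hA hB => ?_⟩
  by_contra hD
  rcases eq_or_ne D 0 with rfl | hD₀
  · rw [mul_zero] at hA hB
    subst hA hB
    exact one_ne_zero (h K _ (RingHom.id K) d S.d_add S.d_mul (fun _ => rfl) 1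
      (S.eval_zero_left _ _ _) (S.eval_zero_left _ _ _))
  obtain ⟨L, _, ιL, dL, hadd, hmul, hext, x, hx, hDx⟩ := S.exists_ne_zero_eval_eq_zero
    (Nat.pos_of_ne_zero fun h₀ => hD (S.isUnit_of_ord_eq_zero hD₀ h₀))
  refine hx (h L _ ιL dL hadd hmul hext x ?_ ?_)
  · rw [hA, S.eval_mul hadd hmul hext, hDx, S.eval_zero_right hadd]
  · rw [hB, S.eval_mul hadd hmul hext, hDx, S.eval_zero_right hadd]

end DiffOpRing

theorem stmt_16_general (K : Type) [Field K] (d : K → K)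
    (R : Type) [Ring R] (S : DiffOpRing K d R)
    (A B : R) (hB : B ≠ 0) :
    ((∀ C D : R, D ≠ 0 →
        (∃ E F : R, E ≠ 0 ∧ F ≠ 0 ∧ A * E = C * F ∧ B * E = D * F) →
        S.ord B ≤ S.ord D) ↔
      (∀ A₁ B₁ D : R, A = A₁ * D → B = B₁ * D → IsUnit D)) ∧
    ((∀ A₁ B₁ D : R, A = A₁ * D → B = B₁ * D → IsUnit D) ↔
      (∀ (L : Type) (_ : Field L) (ι : K →+* L) (dL : L → L),
        (∀ a b : L, dL (a + b) = dL a + dL b) →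
        (∀ a b : L, dL (a * b) = a * dL b + dL a * b) →
        (∀ x : K, dL (ι x) = ι (d x)) →
        ∀ x : L, ((S.coeff A).sum fun i a => ι a * dL^[i] x) = 0 →
          ((S.coeff B).sum fun i a => ι a * dL^[i] x) = 0 → x = 0)) :=
  ⟨S.hasMinimalDenominator_iff_isRightCoprime hB, S.isRightCoprime_iff_hasNoCommonSolution A B⟩

/-- Let K be a differential field of characteristic 0 and H = AB⁻¹
(A, B ∈ K[∂], B ≠ 0) a fraction of scalar differential operators. The following are
equivalent:
(i) the order of B is minimal among all right fractional decompositions of H (where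
CD⁻¹ = AB⁻¹ is expressed, via the Ore condition, by the existence of non-zero E, F
with AE = CF and BE = DF);
(ii) A and B have no non-invertible common right divisor in K[∂];
(iii) A and B have no common non-zero kernel element in the linear closure of K
(equivalently, in any differential field extension of K). -/
theorem stmt_16 (K : Type) [Field K] [CharZero K] (d : K → K)
    (hd_add : ∀ a b : K, d (a + b) = d a + d b)
    (hd_mul : ∀ a b : K, d (a * b) = a * d b + d a * b)
    (R : Type) [Ring R] (S : DiffOpRing K d R)
    (A B : R) (hB : B ≠ 0) :
    ((∀ C D : R, D ≠ 0 →
        (∃ E F : R, E ≠ 0 ∧ F ≠ 0 ∧ A * E = C * F ∧ B * E = D * F) →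
        S.ord B ≤ S.ord D) ↔
      (∀ A₁ B₁ D : R, A = A₁ * D → B = B₁ * D → IsUnit D)) ∧
    ((∀ A₁ B₁ D : R, A = A₁ * D → B = B₁ * D → IsUnit D) ↔
      (∀ (L : Type) (_ : Field L) (ι : K →+* L) (dL : L → L),
        (∀ a b : L, dL (a + b) = dL a + dL b) →
        (∀ a b : L, dL (a * b) = a * dL b + dL a * b) →
        (∀ x : K, dL (ι x) = ι (d x)) →
        ∀ x : L, ((S.coeff A).sum fun i a => ι a * dL^[i] x) = 0 →
          ((S.coeff B).sum fun i a => ι a * dL^[i] x) = 0 → x = 0)) :=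
  stmt_16_general K d R S A B hB
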